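/- arXiv:1207.3062 — 2 statements merged into one kernel-verified Lean document; each statement's English description precedes it below -/
import Mathlib

section
/- The map (d, e, f) ↦ (a, b, c) given by c = √(e/x₂), b = f/(x₂√(e/x₂)), a = √((d − f²/e)/x₁), defined on the region where e/x₂ > 0 and (d − f²/e)/x₁ > 0, has Jacobian determinant of absolute value 1/(4 a c² x₁ x₂²), where a and c are as defined. -/
/-!
The map `φ` is a local right inverse of the polynomial map
`ψ (a, b, c) = (a² x₁ + b² x₂, c² x₂, b c x₂)`: the chain rule gives `Dψ(φ p) ∘ Dφ(p) = id`,
so `det Dφ(p) = (det Dψ(φ p))⁻¹`, and the Jacobian of `ψ` has determinant `-4 a c² x₁ x₂²`.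
-/

open Real Filter Topology

theorem det_fderiv_eq_inv_det_of_eventually_leftInverse {𝕜 E : Type*}
    [NontriviallyNormedField 𝕜] [NormedAddCommGroup E] [NormedSpace 𝕜 E]
    {f g : E → E} {g' : E →L[𝕜] E} {x : E} (hf : DifferentiableAt 𝕜 f x)
    (hg : HasFDerivAt g g' (f x)) (hgf : ∀ᶠ y in 𝓝 x, g (f y) = y) :
    LinearMap.det (fderiv 𝕜 f x : E →ₗ[𝕜] E) = (LinearMap.det (g' : E →ₗ[𝕜] E))⁻¹ := by
  have hcomp : g'.comp (fderiv 𝕜 f x) = ContinuousLinearMap.id 𝕜 E :=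
    (hg.comp x hf.hasFDerivAt).unique ((hasFDerivAt_id x).congr_of_eventuallyEq hgf)
  refine eq_inv_of_mul_eq_one_right ?_
  rw [← LinearMap.det_comp, ← ContinuousLinearMap.toLinearMap_comp, hcomp,
    ContinuousLinearMap.coe_id, LinearMap.det_id]

/-- `(d, e, f) = ((R Σ Rᵀ)₀₀, (R Σ Rᵀ)₁₁, (R Σ Rᵀ)₀₁)` for `R = !![a, b; 0, c]` and
`Σ = diagonal ![x₁, x₂]`. -/
def covEntries (x₁ x₂ : ℝ) (r : Fin 3 → ℝ) : Fin 3 → ℝ :=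
  ![r 0 ^ 2 * x₁ + r 1 ^ 2 * x₂, r 2 ^ 2 * x₂, r 1 * r 2 * x₂]

def covEntriesJacobian (x₁ x₂ : ℝ) (r : Fin 3 → ℝ) : Matrix (Fin 3) (Fin 3) ℝ :=
  !![2 * r 0 * x₁, 2 * r 1 * x₂, 0; 0, 0, 2 * r 2 * x₂; 0, r 2 * x₂, r 1 * x₂]

theorem hasFDerivAt_covEntries (x₁ x₂ : ℝ) (r : Fin 3 → ℝ) :
    HasFDerivAt (covEntries x₁ x₂)
      (LinearMap.toContinuousLinearMap (Matrix.toLin' (covEntriesJacobian x₁ x₂ r))) r := by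
  refine hasFDerivAt_pi'' fun i => ?_
  have h (j : Fin 3) := hasFDerivAt_apply (𝕜 := ℝ) j r
  fin_cases i <;>
    [refine ((((h 0).pow 2).mul_const x₁).add (((h 1).pow 2).mul_const x₂)).congr_fderiv ?_;
      refine (((h 2).pow 2).mul_const x₂).congr_fderiv ?_;
      refine (((h 1).mul (h 2)).mul_const x₂).congr_fderiv ?_] <;>
  · ext v
    simp only [covEntriesJacobian, Fin.isValue, Fin.zero_eta, Fin.mk_one, Fin.reduceFinMk,
      add_apply, smul_apply, ContinuousLinearMap.proj_apply,
      ContinuousLinearMap.comp_apply, LinearMap.coe_toContinuousLinearMap', Matrix.toLin'_apply,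
      Matrix.cons_mulVec, Matrix.empty_mulVec, dotProduct, Fin.sum_univ_three, Matrix.cons_val_zero,
      Matrix.cons_val_one, Matrix.cons_val, smul_add, smul_eq_mul, nsmul_eq_mul,
      Nat.add_one_sub_one, pow_one, Nat.cast_ofNat]
    ring

theorem det_covEntriesJacobian (x₁ x₂ : ℝ) (r : Fin 3 → ℝ) :
    (covEntriesJacobian x₁ x₂ r).det = -(4 * r 0 * r 2 ^ 2 * x₁ * x₂ ^ 2) := by
  rw [covEntriesJacobian, Matrix.det_fin_three]
  simp only [Matrix.of_apply, Matrix.cons_val', Matrix.cons_val_zero, Matrix.cons_val_one,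
    Matrix.cons_val, Matrix.cons_val_fin_one, Fin.isValue]
  ring

noncomputable def covEntriesInv (x₁ x₂ : ℝ) (p : Fin 3 → ℝ) : Fin 3 → ℝ :=
  ![√((p 0 - p 2 ^ 2 / p 1) / x₁), p 2 / (x₂ * √(p 1 / x₂)), √(p 1 / x₂)]

theorem covEntries_covEntriesInv {x₁ x₂ : ℝ} {p : Fin 3 → ℝ} (he : 0 < p 1 / x₂)
    (hd : 0 < (p 0 - p 2 ^ 2 / p 1) / x₁) : covEntries x₁ x₂ (covEntriesInv x₁ x₂ p) = p := by
  obtain ⟨he', hx₂⟩ := div_ne_zero_iff.1 he.ne'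
  obtain ⟨-, hx₁⟩ := div_ne_zero_iff.1 hd.ne'
  have hc : √(p 1 / x₂) ≠ 0 := (sqrt_pos.2 he).ne'
  ext i
  fin_cases i <;>
    simp only [covEntries, covEntriesInv, Fin.zero_eta, Fin.mk_one, Fin.reduceFinMk, Fin.isValue,
      Matrix.cons_val_zero, Matrix.cons_val_one, Matrix.cons_val, mul_pow, div_pow, sq_sqrt he.le,
      sq_sqrt hd.le]
  · field_simp
    ring
  · field_simp
  · field_simp

theorem eventually_covEntries_covEntriesInv {x₁ x₂ : ℝ} {p : Fin 3 → ℝ} (he : 0 < p 1 / x₂)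
    (hd : 0 < (p 0 - p 2 ^ 2 / p 1) / x₁) :
    ∀ᶠ q in 𝓝 p, covEntries x₁ x₂ (covEntriesInv x₁ x₂ q) = q := by
  have he' : p 1 ≠ 0 := (div_ne_zero_iff.1 he.ne').1
  have hce : ContinuousAt (fun q : Fin 3 → ℝ => q 1 / x₂) p :=
    (continuousAt_apply 1 p).div_const x₂
  have hcd : ContinuousAt (fun q : Fin 3 → ℝ => (q 0 - q 2 ^ 2 / q 1) / x₁) p :=
    ((continuousAt_apply 0 p).sub
      (((continuousAt_apply 2 p).pow 2).div (continuousAt_apply 1 p) he')).div_const x₁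
  filter_upwards [continuousAt_const.eventually_lt hce he,
    continuousAt_const.eventually_lt hcd hd] with q using covEntries_covEntriesInv

theorem differentiableAt_covEntriesInv {x₁ x₂ : ℝ} {p : Fin 3 → ℝ} (he : 0 < p 1 / x₂)
    (hd : 0 < (p 0 - p 2 ^ 2 / p 1) / x₁) : DifferentiableAt ℝ (covEntriesInv x₁ x₂) p := by
  obtain ⟨he', hx₂⟩ := div_ne_zero_iff.1 he.ne'
  have hc : x₂ * √(p 1 / x₂) ≠ 0 := mul_ne_zero hx₂ (sqrt_pos.2 he).ne'
  refine differentiableAt_pi.2 fun i => ?_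
  fin_cases i <;> dsimp [covEntriesInv] <;>
    fun_prop (disch := first | assumption | exact hd.ne' | exact he.ne')

theorem stmt_1_general (x₁ x₂ : ℝ)
    (φ : (Fin 3 → ℝ) → (Fin 3 → ℝ))
    (hφ : ∀ p : Fin 3 → ℝ,
      φ p = ![Real.sqrt ((p 0 - (p 2)^2 / p 1) / x₁),
              p 2 / (x₂ * Real.sqrt (p 1 / x₂)),
              Real.sqrt (p 1 / x₂)])
    (p : Fin 3 → ℝ) (he : 0 < p 1 / x₂) (hd : 0 < (p 0 - (p 2)^2 / p 1) / x₁) :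
    |LinearMap.det ((fderiv ℝ φ p : (Fin 3 → ℝ) →L[ℝ] (Fin 3 → ℝ)) :
        (Fin 3 → ℝ) →ₗ[ℝ] (Fin 3 → ℝ))| =
      |1 / (4 * Real.sqrt ((p 0 - (p 2)^2 / p 1) / x₁)
              * (Real.sqrt (p 1 / x₂))^2 * x₁ * x₂^2)| := by
  obtain rfl : φ = covEntriesInv x₁ x₂ := funext hφ
  rw [det_fderiv_eq_inv_det_of_eventually_leftInverse (differentiableAt_covEntriesInv he hd)
    (hasFDerivAt_covEntries x₁ x₂ _) (eventually_covEntries_covEntriesInv he hd),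
    LinearMap.coe_toContinuousLinearMap, LinearMap.det_toLin', det_covEntriesJacobian]
  simp [covEntriesInv]

/-- The inverse change of variables `(d,e,f) ↦ (a,b,c)` with
`c = √(e/x₂)`, `b = f/(x₂√(e/x₂))`, `a = √((d − f²/e)/x₁)`, on the region where
`e/x₂ > 0` and `(d − f²/e)/x₁ > 0`, has Jacobian determinant of absolute value
`1/(4 a c² x₁ x₂²)`. -/
theorem stmt_1 (x₁ x₂ : ℝ) (hx₁ : x₁ ≠ 0) (hx₂ : x₂ ≠ 0)
    (φ : (Fin 3 → ℝ) → (Fin 3 → ℝ))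
    (hφ : ∀ p : Fin 3 → ℝ,
      φ p = ![Real.sqrt ((p 0 - (p 2)^2 / p 1) / x₁),
              p 2 / (x₂ * Real.sqrt (p 1 / x₂)),
              Real.sqrt (p 1 / x₂)])
    (p : Fin 3 → ℝ) (he : 0 < p 1 / x₂) (hd : 0 < (p 0 - (p 2)^2 / p 1) / x₁) :
    |LinearMap.det ((fderiv ℝ φ p : (Fin 3 → ℝ) →L[ℝ] (Fin 3 → ℝ)) :
        (Fin 3 → ℝ) →ₗ[ℝ] (Fin 3 → ℝ))| =
      |1 / (4 * Real.sqrt ((p 0 - (p 2)^2 / p 1) / x₁)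
              * (Real.sqrt (p 1 / x₂))^2 * x₁ * x₂^2)| :=
  stmt_1_general x₁ x₂ φ hφ p he hd
end

section
/- For the special case x₁ = −x₂ = x > 0, with L ≥ 2 an integer and β > 0, the function f(σ) = 2 σ^{βL/2 − β/2 − 1} Γ(βL − β + 1) (σ+1)^{−β(L−1)} / (β(L−1) Γ(β(L−1)/2)²) is a probability density on [1, ∞): ∫₁^∞ f(σ) dσ = 1. -/
open Real MeasureTheory

/-!
The substitution `σ = t / (1 - t)` maps `(1/2, 1)` onto `(1, ∞)` and turns
`σ ^ (a - 1) (σ + 1) ^ (-2a) dσ` into the symmetric Beta integrand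
`t ^ (a - 1) (1 - t) ^ (a - 1) dt`.
By symmetry its integral over `(1/2, 1)` is half the Beta integral `Γ(a)² / Γ(2a)`; with
`a = β(L - 1)/2` and `Γ(2a + 1) = 2a Γ(2a)` the normalising constant cancels exactly.
-/

theorem integral_rpow_mul_one_sub_rpow {a b : ℝ} (ha : 0 < a) (hb : 0 < b) :
    ∫ t in (0 : ℝ)..1, t ^ (a - 1) * (1 - t) ^ (b - 1) = Gamma a * Gamma b / Gamma (a + b) := by
  have hcast : ((∫ t in (0 : ℝ)..1, t ^ (a - 1) * (1 - t) ^ (b - 1) : ℝ) : ℂ)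
      = Complex.betaIntegral a b := by
    rw [Complex.betaIntegral, ← intervalIntegral.integral_ofReal]
    refine intervalIntegral.integral_congr fun t ht => ?_
    rw [Set.uIcc_of_le zero_le_one] at ht
    push_cast [Complex.ofReal_cpow ht.1, Complex.ofReal_cpow (sub_nonneg.2 ht.2)]
    rfl
  rw [← Complex.ofReal_inj, hcast,
    Complex.betaIntegral_eq_Gamma_mul_div _ _ (by simpa) (by simpa)]
  push_cast [← Complex.Gamma_ofReal]
  rfl

theorem intervalIntegral.integral_half_one_of_symmetric {f : ℝ → ℝ}
    (hf : ∀ t, f (1 - t) = f t) (hint : IntervalIntegrable f volume 0 1) :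
    ∫ t in (1 / 2 : ℝ)..1, f t = (∫ t in (0 : ℝ)..1, f t) / 2 := by
  have hreflect : ∫ t in (0 : ℝ)..1 / 2, f t = ∫ t in (1 / 2 : ℝ)..1, f t := by
    have := intervalIntegral.integral_comp_sub_left (a := 1 / 2) (b := 1) f 1
    norm_num [hf] at this
    norm_num [this]
  have hsplit := intervalIntegral.integral_add_adjacent_intervals (a := 0) (b := 1 / 2) (c := 1)
    (hint.mono_set (Set.uIcc_subset_uIcc (by simp) (by norm_num [Set.mem_uIcc])))
    (hint.mono_set (Set.uIcc_subset_uIcc (by norm_num [Set.mem_uIcc]) (by simp)))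
  rw [← hsplit, hreflect]
  ring

theorem image_div_one_sub_Ioo_half_one :
    (fun t : ℝ => t / (1 - t)) '' Set.Ioo (1 / 2) 1 = Set.Ioi 1 := by
  ext σ
  constructor
  · rintro ⟨t, ⟨ht₁, ht₂⟩, rfl⟩
    rw [Set.mem_Ioi, one_lt_div (by linarith)]
    linarith
  · intro (hσ : 1 < σ)
    refine ⟨σ / (σ + 1), ⟨?_, ?_⟩, ?_⟩
    · rw [lt_div_iff₀ (by linarith)]; linarith
    · rw [div_lt_one (by linarith)]; linarith
    · field_simp
      ring

theorem integral_Ioi_one_rpow_mul_add_one_rpow_eq_integral_half_one (a b : ℝ) :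
    ∫ σ in Set.Ioi (1 : ℝ), σ ^ (a - 1) * (σ + 1) ^ (-(a + b))
      = ∫ t in (1 / 2 : ℝ)..1, t ^ (a - 1) * (1 - t) ^ (b - 1) := by
  have hderiv : ∀ t ∈ Set.Ioo (1 / 2 : ℝ) 1, HasDerivWithinAt (fun t : ℝ => t / (1 - t))
      (((1 - t) ^ 2)⁻¹) (Set.Ioo (1 / 2) 1) t := by
    intro t ht
    have h : (1 : ℝ) - t ≠ 0 := by linarith [ht.2]
    refine (((hasDerivAt_id' t).div ((hasDerivAt_id' t).const_sub 1) h)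
      |>.congr_deriv ?_).hasDerivWithinAt
    field_simp
    ring
  have hinj : Set.InjOn (fun t : ℝ => t / (1 - t)) (Set.Ioo (1 / 2) 1) := by
    intro t ht s hs hts
    rw [div_eq_div_iff (by linarith [ht.2]) (by linarith [hs.2])] at hts
    linarith
  rw [← image_div_one_sub_Ioo_half_one,
    integral_image_eq_integral_abs_deriv_smul measurableSet_Ioo hderiv hinj,
    intervalIntegral.integral_of_le (by norm_num), integral_Ioc_eq_integral_Ioo]
  refine setIntegral_congr_fun measurableSet_Ioo fun t ⟨ht₁, ht₂⟩ => ?_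
  have ht : 0 < t := by linarith
  have h1t : 0 < 1 - t := by linarith
  have hσ1 : t / (1 - t) + 1 = (1 - t)⁻¹ := by field_simp; ring
  rw [smul_eq_mul, hσ1, abs_of_pos (by positivity), div_rpow ht.le h1t.le, inv_rpow h1t.le,
    ← rpow_neg h1t.le, ← rpow_natCast, ← rpow_neg h1t.le, div_eq_mul_inv, ← rpow_neg h1t.le]
  rw [mul_comm, mul_assoc, mul_assoc, ← rpow_add h1t, ← rpow_add h1t]
  ring_nf

theorem integral_Ioi_one_rpow_mul_add_one_rpow_neg_two_mul {a : ℝ} (ha : 0 < a) :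
    ∫ σ in Set.Ioi (1 : ℝ), σ ^ (a - 1) * (σ + 1) ^ (-(2 * a))
      = Gamma a ^ 2 / (2 * Gamma (2 * a)) := by
  have hbeta := integral_rpow_mul_one_sub_rpow ha ha
  have hint : IntervalIntegrable (fun t : ℝ => t ^ (a - 1) * (1 - t) ^ (a - 1)) volume 0 1 :=
    intervalIntegral.intervalIntegrable_of_integral_ne_zero <| by
      rw [hbeta]; have := Gamma_pos_of_pos ha; have := Gamma_pos_of_pos (add_pos ha ha); positivity
  rw [two_mul, integral_Ioi_one_rpow_mul_add_one_rpow_eq_integral_half_one,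
    intervalIntegral.integral_half_one_of_symmetric (fun t => by simp [mul_comm]) hint, hbeta]
  ring

theorem stmt_6_general (L : ℕ) (hL : 2 ≤ L) (β : ℝ) (hβ : 0 < β) :
    ∫ σ in Set.Ioi (1 : ℝ),
      2 * σ ^ (β * L / 2 - β / 2 - 1) * Real.Gamma (β * L - β + 1)
        * (σ + 1) ^ (-(β * (L - 1)))
        / (β * (L - 1) * (Real.Gamma (β * (L - 1) / 2))^2) = 1 := by
  set a := β * (L - 1) / 2 with ha_def
  have ha : 0 < a := by
    have : (2 : ℝ) ≤ L := by exact_mod_cast hL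
    rw [ha_def]; nlinarith
  have hΓ : Gamma (β * L - β + 1) = 2 * a * Gamma (2 * a) := by
    rw [← Gamma_add_one (by positivity), ha_def]; ring_nf
  calc _ = 2 * Gamma (β * L - β + 1) / (β * (L - 1) * Gamma a ^ 2)
        * ∫ σ in Set.Ioi (1 : ℝ), σ ^ (a - 1) * (σ + 1) ^ (-(2 * a)) := by
        rw [← integral_const_mul]; congr 1 with σ; rw [ha_def]; ring_nf
    _ = 1 := by
        rw [integral_Ioi_one_rpow_mul_add_one_rpow_neg_two_mul ha, hΓ,
          show β * (L - 1) = 2 * a by rw [ha_def]; ring]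
        have := Gamma_pos_of_pos ha
        have := Gamma_pos_of_pos (mul_pos two_pos ha)
        field_simp

/-- In the symmetric case `x₁ = −x₂ = x > 0`, the condition number density
`f(σ) = 2 σ^{βL/2 − β/2 − 1} Γ(βL − β + 1) (σ+1)^{−β(L−1)} / (β(L−1) Γ(β(L−1)/2)²)`
is a probability density on `[1, ∞)`. -/
theorem stmt_6 (L : ℕ) (hL : 2 ≤ L) (β : ℝ) (hβ : 0 < β) (x : ℝ) (hx : 0 < x) :
    ∫ σ in Set.Ioi (1 : ℝ),
      2 * σ ^ (β * L / 2 - β / 2 - 1) * Real.Gamma (β * L - β + 1)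
        * (σ + 1) ^ (-(β * (L - 1)))
        / (β * (L - 1) * (Real.Gamma (β * (L - 1) / 2))^2) = 1 :=
  stmt_6_general L hL β hβ
end
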